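/- arXiv:2603.03973 — 7 statements merged into one kernel-verified Lean document; each statement's English description precedes it below -/
import Mathlib

section
/- Let E be a real Banach space, let a_u < b_u and a_v < b_v be real numbers, and set h_u = b_u - a_u, h_v = b_v - a_v. Let ψ_u, ψ_v : ℝ → ℝ be differentiable on [a_u, b_u] and [a_v, b_v] respectively with |ψ_u'(u)| ≤ K_u on [a_u, b_u] and |ψ_v'(v)| ≤ K_v on [a_v, b_v], and let φ, ε : ℝ → E be differentiable with ‖φ'(u)‖ ≤ M_u on [a_u, b_u] and ‖ε'(v)‖ ≤ M_v on [a_v, b_v]. Fix A, B, κ_u, κ_v ∈ ℝ and x_i ∈ E, and define the exact update X = A•x_i + B•(∫_{a_u}^{b_u} ψ_u'(u)•φ(u) du + ∫_{a_v}^{b_v} ψ_v'(v)•ε(v) dv) and the first-order predictor X₁ = A•x_i + B•((ψ_u(b_u) - ψ_u(a_u) + κ_u h_u²)•φ(a_u) + (ψ_v(b_v) - ψ_v(a_v) + κ_v h_v²)•ε(a_v)). Then ‖X - X₁‖ ≤ |B| · ((K_u M_u / 2 + |κ_u| ‖φ(a_u)‖) h_u² + (K_v M_v / 2 + |κ_v|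 ‖ε(a_v)‖) h_v²); in particular the local truncation error of the first-order predictor is O(h_u² + h_v²). -/
/-!
On each of the two domains the exact term is `∫ ψ' • φ` and the predictor freezes `φ` at the left
endpoint. Since `∫ ψ' • φ(a) = (ψ(b) - ψ(a)) • φ(a)` by the fundamental theorem of calculus, the
error is `∫ ψ'(u) • (φ(u) - φ(a)) du`, and the mean value inequality `‖φ(u) - φ(a)‖ ≤ M (u - a)`
bounds it by `K M ∫ (u - a) du = K M h² / 2`. The residual `κ h²` adds `|κ| ‖φ(a)‖ h²`.
-/

open Set intervalIntegral

theorem intervalIntegrable_of_hasDerivAt_of_abs_le {a b K : ℝ} {ψ ψ' : ℝ → ℝ} (hab : a ≤ b)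
    (hψ : ∀ u ∈ Icc a b, HasDerivAt ψ (ψ' u) u) (hψK : ∀ u ∈ Icc a b, |ψ' u| ≤ K) :
    IntervalIntegrable ψ' MeasureTheory.volume a b := by
  -- `ψ' + K` is a nonnegative derivative, hence integrable.
  have hg : ∀ u ∈ Icc a b, HasDerivAt (fun u => ψ u + u * K) (ψ' u + K) u :=
    fun u hu => (hψ u hu).add (hasDerivAt_mul_const K)
  have hshift : IntervalIntegrable (fun u => ψ' u + K) MeasureTheory.volume a b := by
    refine intervalIntegrable_deriv_of_nonneg (g := fun u => ψ u + u * K) ?_ ?_ ?_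
    · rw [uIcc_of_le hab]
      exact fun u hu => (hg u hu).continuousAt.continuousWithinAt
    all_goals rw [min_eq_left hab, max_eq_right hab]; intro u hu
    · exact hg u (Ioo_subset_Icc_self hu)
    · linarith [neg_abs_le (ψ' u), hψK u (Ioo_subset_Icc_self hu)]
  simpa using hshift.sub (intervalIntegrable_const (c := K))

theorem norm_integral_smul_sub_smul_left_le {E : Type*} [NormedAddCommGroup E] [NormedSpace ℝ E]
    [CompleteSpace E] {a b K M : ℝ} {ψ ψ' : ℝ → ℝ} {φ φ' : ℝ → E} (hab : a ≤ b)
    (hψ : ∀ u ∈ Icc a b, HasDerivAt ψ (ψ' u) u) (hψK : ∀ u ∈ Icc a b, |ψ' u| ≤ K)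
    (hφ : ∀ u ∈ Icc a b, HasDerivAt φ (φ' u) u) (hφM : ∀ u ∈ Icc a b, ‖φ' u‖ ≤ M) :
    ‖(∫ u in a..b, ψ' u • φ u) - (ψ b - ψ a) • φ a‖ ≤ K * M / 2 * (b - a) ^ 2 := by
  have hψ'int := intervalIntegrable_of_hasDerivAt_of_abs_le hab hψ hψK
  have hφcont : ContinuousOn φ (uIcc a b) := by
    rw [uIcc_of_le hab]
    exact fun u hu => (hφ u hu).continuousAt.continuousWithinAt
  have hFTC : ∫ u in a..b, ψ' u = ψ b - ψ a :=
    integral_eq_sub_of_hasDerivAt (fun u hu => hψ u (by rwa [uIcc_of_le hab] at hu)) hψ'int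
  have herror : (∫ u in a..b, ψ' u • φ u) - (ψ b - ψ a) • φ a
      = ∫ u in a..b, ψ' u • (φ u - φ a) := by
    simp_rw [smul_sub]
    rw [integral_sub (hψ'int.smul_continuousOn hφcont)
      (hψ'int.smul_continuousOn continuousOn_const), intervalIntegral.integral_smul_const, hFTC]
  have hlip : ∀ u ∈ Icc a b, ‖φ u - φ a‖ ≤ M * (u - a) :=
    norm_image_sub_le_of_norm_deriv_le_segment' (fun u hu => (hφ u hu).hasDerivWithinAt)
      (fun u hu => hφM u (Ico_subset_Icc_self hu))
  have hK : 0 ≤ K := (abs_nonneg _).trans (hψK a (left_mem_Icc.2 hab))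
  calc ‖(∫ u in a..b, ψ' u • φ u) - (ψ b - ψ a) • φ a‖
      = ‖∫ u in a..b, ψ' u • (φ u - φ a)‖ := by rw [herror]
    _ ≤ ∫ u in a..b, K * (M * (u - a)) := by
      refine norm_integral_le_of_norm_le hab (Filter.Eventually.of_forall fun u hu => ?_)
        (Continuous.intervalIntegrable (by fun_prop) a b)
      rw [norm_smul, Real.norm_eq_abs]
      exact mul_le_mul (hψK u (Ioc_subset_Icc_self hu)) (hlip u (Ioc_subset_Icc_self hu))
        (norm_nonneg _) hK
    _ = K * M / 2 * (b - a) ^ 2 := by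
      simp only [integral_const_mul, intervalIntegrable_id, intervalIntegrable_const, integral_sub,
        integral_id, integral_const, smul_eq_mul]
      ring

theorem norm_integral_smul_sub_perturbed_smul_left_le {E : Type*} [NormedAddCommGroup E]
    [NormedSpace ℝ E] [CompleteSpace E] {a b K M : ℝ} {ψ ψ' : ℝ → ℝ} {φ φ' : ℝ → E} (hab : a ≤ b)
    (hψ : ∀ u ∈ Icc a b, HasDerivAt ψ (ψ' u) u) (hψK : ∀ u ∈ Icc a b, |ψ' u| ≤ K)
    (hφ : ∀ u ∈ Icc a b, HasDerivAt φ (φ' u) u) (hφM : ∀ u ∈ Icc a b, ‖φ' u‖ ≤ M) (κ : ℝ) :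
    ‖(∫ u in a..b, ψ' u • φ u) - (ψ b - ψ a + κ * (b - a) ^ 2) • φ a‖
      ≤ (K * M / 2 + |κ| * ‖φ a‖) * (b - a) ^ 2 :=
  calc ‖(∫ u in a..b, ψ' u • φ u) - (ψ b - ψ a + κ * (b - a) ^ 2) • φ a‖
      = ‖((∫ u in a..b, ψ' u • φ u) - (ψ b - ψ a) • φ a) - (κ * (b - a) ^ 2) • φ a‖ := by
        rw [add_smul, sub_add_eq_sub_sub]
    _ ≤ K * M / 2 * (b - a) ^ 2 + ‖(κ * (b - a) ^ 2) • φ a‖ :=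
        (norm_sub_le _ _).trans
          (add_le_add_left (norm_integral_smul_sub_smul_left_le hab hψ hψK hφ hφM) _)
    _ = (K * M / 2 + |κ| * ‖φ a‖) * (b - a) ^ 2 := by
        rw [norm_smul, Real.norm_eq_abs, abs_mul, abs_sq]
        ring

/-- Local truncation error of the first-order predictor of Dual-Solver. -/
theorem dual_solver_first_order_predictor_lte
    {E : Type*} [NormedAddCommGroup E] [NormedSpace ℝ E] [CompleteSpace E]
    (a_u b_u a_v b_v : ℝ) (hab_u : a_u < b_u) (hab_v : a_v < b_v)
    (ψu ψu' ψv ψv' : ℝ → ℝ) (φ φ' ε ε' : ℝ → E)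
    (Ku Kv Mu Mv : ℝ)
    (hψu : ∀ u ∈ Set.Icc a_u b_u, HasDerivAt ψu (ψu' u) u)
    (hψuK : ∀ u ∈ Set.Icc a_u b_u, |ψu' u| ≤ Ku)
    (hψv : ∀ v ∈ Set.Icc a_v b_v, HasDerivAt ψv (ψv' v) v)
    (hψvK : ∀ v ∈ Set.Icc a_v b_v, |ψv' v| ≤ Kv)
    (hφ : ∀ u ∈ Set.Icc a_u b_u, HasDerivAt φ (φ' u) u)
    (hφM : ∀ u ∈ Set.Icc a_u b_u, ‖φ' u‖ ≤ Mu)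
    (hε : ∀ v ∈ Set.Icc a_v b_v, HasDerivAt ε (ε' v) v)
    (hεM : ∀ v ∈ Set.Icc a_v b_v, ‖ε' v‖ ≤ Mv)
    (A B κu κv : ℝ) (x_i : E) :
    ‖(A • x_i + B • ((∫ u in a_u..b_u, ψu' u • φ u) + ∫ v in a_v..b_v, ψv' v • ε v))
      - (A • x_i + B • ((ψu b_u - ψu a_u + κu * (b_u - a_u) ^ 2) • φ a_u
          + (ψv b_v - ψv a_v + κv * (b_v - a_v) ^ 2) • ε a_v))‖
    ≤ |B| * ((Ku * Mu / 2 + |κu| * ‖φ a_u‖) * (b_u - a_u) ^ 2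
        + (Kv * Mv / 2 + |κv| * ‖ε a_v‖) * (b_v - a_v) ^ 2) := by
  have hu := norm_integral_smul_sub_perturbed_smul_left_le hab_u.le hψu hψuK hφ hφM κu
  have hv := norm_integral_smul_sub_perturbed_smul_left_le hab_v.le hψv hψvK hε hεM κv
  rw [add_sub_add_left_eq_sub, ← smul_sub, norm_smul, Real.norm_eq_abs, add_sub_add_comm]
  gcongr
  exact (norm_add_le _ _).trans (add_le_add hu hv)
end

section
/- Let E be a real Banach space and let a₋ < a < b be real numbers; set h₋ = a - a₋, h = b - a and r = h₋ / h. Let ψ : ℝ → ℝ be twice differentiable on [a₋, b] with |ψ'(u)| ≤ K₁ and |ψ''(u)| ≤ K₂ on [a, b], and let φ : ℝ → E be twice differentiable on [a₋, b] with ‖φ'(u)‖ ≤ M₁ and ‖φ''(u)‖ ≤ M₂ on [a₋, b]. Fix κ ∈ ℝ, write Δψ = ψ(b) - ψ(a) and Δφ₋ = φ(a) - φ(a₋), and define the exact integral I = ∫_a^b ψ'(u)•φ(u) du and the second-order backward-difference approximation I₂ = (Δψ)•φ(a) + ((Δψ + κh²)/(2r))•Δφ₋. Then ‖I - I₂‖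 ≤ (M₁K₂/4 + |κ|M₁/2 + K₁M₂/6) h³ + (M₂ h₋ / 4)(K₁ h² + |κ| h³); in particular, when the step ratio h₋/h is bounded, the local truncation error of the second-order predictor is O(h³). -/
/-!
Expanding `φ` to first order at `a` splits the error into three pieces: the Taylor remainder
of `φ` on `[a, b]` integrated against `ψ'`, a scalar multiple of `φ' a`, and the
backward-difference remainder `φ a - φ aₘ - (a - aₘ) • φ' a` times the predictor coefficient.
Since that coefficient times `a - aₘ` is `(Δψ + κ h²) h / 2`, the scalar is the first moment of
`ψ'` about the midpoint of `[a, b]` minus `κ h³ / 2`, and the moment is `O(h³)` because `ψ'` may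
be replaced by `ψ' - ψ' ((a + b) / 2)`. Both remainders obey the Taylor bound `M₂ (t - s)² / 2`.
-/

open Set intervalIntegral

section

variable {E : Type*} [NormedAddCommGroup E] [NormedSpace ℝ E]

theorem norm_le_of_norm_deriv_le_mul_sub {g g' : ℝ → E} {c x M : ℝ} (hcx : c ≤ x)
    (hg : ∀ u ∈ Icc c x, HasDerivAt g (g' u) u) (hg₀ : g c = 0)
    (hbound : ∀ u ∈ Icc c x, ‖g' u‖ ≤ M * (u - c)) :
    ‖g x‖ ≤ M * (x - c) ^ 2 / 2 := by
  have hB (u : ℝ) : HasDerivAt (fun u => M * (u - c) ^ 2 / 2) (M * (u - c)) u :=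
    ((((hasDerivAt_id' u).sub_const c).fun_pow 2).const_mul M).div_const 2 |>.congr_deriv
      (by ring)
  exact image_norm_le_of_norm_deriv_right_le_deriv_boundary
    (fun u hu => (hg u hu).continuousAt.continuousWithinAt)
    (fun u hu => (hg u (Ico_subset_Icc_self hu)).hasDerivWithinAt) (by simp [hg₀]) hB
    (fun u hu => hbound u (Ico_subset_Icc_self hu)) ⟨hcx, le_rfl⟩

theorem norm_taylor_remainder_le {f f' f'' : ℝ → E} {S : Set ℝ} {M s t : ℝ} (hS : Convex ℝ S)
    (hf : ∀ u ∈ S, HasDerivAt f (f' u) u) (hf' : ∀ u ∈ S, HasDerivAt f' (f'' u) u)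
    (hM : ∀ u ∈ S, ‖f'' u‖ ≤ M) (hs : s ∈ S) (ht : t ∈ S) :
    ‖f t - f s - (t - s) • f' s‖ ≤ M * (t - s) ^ 2 / 2 := by
  have hlip : ∀ x ∈ S, ∀ y ∈ S, ‖f' y - f' x‖ ≤ M * ‖y - x‖ := fun x hx y hy =>
    hS.norm_image_sub_le_of_norm_hasDerivWithin_le (fun u hu => (hf' u hu).hasDerivWithinAt)
      hM hx hy
  rcases le_total s t with hst | hts
  · refine norm_le_of_norm_deriv_le_mul_sub (g := fun u => f u - f s - (u - s) • f' s)
      (g' := fun u => f' u - f' s) hst (fun u hu => ?_) (by simp) (fun u hu => ?_)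
    · have hu' : u ∈ S := hS.ordConnected.out hs ht hu
      simpa using ((hf u hu').sub_const (f s)).fun_sub
        (((hasDerivAt_id u).sub_const s).smul_const (f' s))
    · have hu' : u ∈ S := hS.ordConnected.out hs ht hu
      simpa [Real.norm_eq_abs, abs_of_nonneg (sub_nonneg.2 hu.1)] using hlip s hs u hu'
  · -- expanding `f s` around `t` from the left end of `[t, s]` gives the same remainder, negated
    have := norm_le_of_norm_deriv_le_mul_sub (g := fun u => f u - f t - (u - t) • f' u)
      (g' := fun u => -((u - t) • f'' u)) (M := M) hts (fun u hu => ?_) (by simp) (fun u hu => ?_)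
    · rw [← norm_neg]
      convert this using 1
      · congr 1
        module
      · ring
    · have hu' : u ∈ S := hS.ordConnected.out ht hs hu
      convert ((hf u hu').sub_const (f t)).fun_sub
        (((hasDerivAt_id' u).sub_const t).fun_smul (hf' u hu')) using 1
      simp
    · have hu' : u ∈ S := hS.ordConnected.out ht hs hu
      rw [norm_neg, norm_smul, Real.norm_eq_abs, abs_of_nonneg (sub_nonneg.2 hu.1), mul_comm]
      exact mul_le_mul_of_nonneg_right (hM u hu') (sub_nonneg.2 hu.1)

theorem norm_integral_smul_taylor_remainder_le {w : ℝ → ℝ} {f f' f'' : ℝ → E} {a b K M : ℝ}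
    (hab : a ≤ b) (hf : ∀ u ∈ Icc a b, HasDerivAt f (f' u) u)
    (hf' : ∀ u ∈ Icc a b, HasDerivAt f' (f'' u) u) (hM : ∀ u ∈ Icc a b, ‖f'' u‖ ≤ M)
    (hK : ∀ u ∈ Icc a b, |w u| ≤ K) :
    ‖∫ u in a..b, w u • (f u - f a - (u - a) • f' a)‖ ≤ K * M * (b - a) ^ 3 / 6 := by
  have ha : a ∈ Icc a b := left_mem_Icc.2 hab
  have hK₀ : 0 ≤ K := (abs_nonneg _).trans (hK a ha)
  calc _ ≤ ∫ u in a..b, K * M / 2 * (u - a) ^ 2 := by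
        refine norm_integral_le_of_norm_le hab (.of_forall fun u hu => ?_)
          (Continuous.intervalIntegrable (by fun_prop) _ _)
        have hu' : u ∈ Icc a b := Ioc_subset_Icc_self hu
        rw [norm_smul, Real.norm_eq_abs]
        calc _ ≤ K * (M * (u - a) ^ 2 / 2) :=
              mul_le_mul (hK u hu') (norm_taylor_remainder_le (convex_Icc a b) hf hf' hM ha hu')
                (norm_nonneg _) hK₀
          _ = K * M / 2 * (u - a) ^ 2 := by ring
    _ = K * M * (b - a) ^ 3 / 6 := by
        rw [integral_const_mul, integral_comp_sub_right (· ^ 2), integral_pow]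
        ring

theorem abs_integral_mul_sub_midpoint_le {g g' : ℝ → ℝ} {a b K : ℝ} (hab : a ≤ b)
    (hg : ∀ u ∈ Icc a b, HasDerivAt g (g' u) u) (hK : ∀ u ∈ Icc a b, |g' u| ≤ K) :
    |∫ u in a..b, g u * (u - (a + b) / 2)| ≤ K * (b - a) ^ 3 / 12 := by
  have hm : (a + b) / 2 ∈ Icc a b := ⟨by linarith, by linarith⟩
  set m := (a + b) / 2
  have hcont : ContinuousOn g (uIcc a b) := uIcc_of_le hab ▸ HasDerivAt.continuousOn hg
  -- the first moment about the midpoint vanishes, so `g` may be replaced by `g - g m`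
  have hshift : ∫ u in a..b, g u * (u - m) = ∫ u in a..b, (g u - g m) * (u - m) := by
    have hint : IntervalIntegrable (fun u => g u * (u - m)) MeasureTheory.volume a b :=
      (hcont.mul (by fun_prop)).intervalIntegrable
    simp only [sub_mul]
    rw [integral_sub hint (Continuous.intervalIntegrable (by fun_prop) _ _),
      integral_const_mul, integral_comp_sub_right (fun x => x), integral_id]
    simp only [m]
    ring
  rw [hshift, ← Real.norm_eq_abs]
  calc _ ≤ ∫ u in a..b, K * (u - m) ^ 2 := by
        refine norm_integral_le_of_norm_le hab (.of_forall fun u hu => ?_)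
          (Continuous.intervalIntegrable (by fun_prop) _ _)
        have hu' : u ∈ Icc a b := Ioc_subset_Icc_self hu
        rw [norm_mul, Real.norm_eq_abs, Real.norm_eq_abs, sq, ← abs_mul_self, abs_mul, ← mul_assoc]
        refine mul_le_mul_of_nonneg_right ?_ (abs_nonneg _)
        simpa using (convex_Icc a b).norm_image_sub_le_of_norm_hasDerivWithin_le
          (fun u hu => (hg u hu).hasDerivWithinAt) hK hm hu'
    _ = K * (b - a) ^ 3 / 12 := by
        rw [integral_const_mul, integral_comp_sub_right (· ^ 2), integral_pow]
        simp only [m]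
        ring

theorem integral_smul_eq_moment_add_remainder [CompleteSpace E] {ψ ψ' : ℝ → ℝ} {φ : ℝ → E}
    {a b : ℝ} (hab : a ≤ b) (hψ : ∀ u ∈ Icc a b, HasDerivAt ψ (ψ' u) u)
    (hψ' : ContinuousOn ψ' (Icc a b)) (hφ : ContinuousOn φ (Icc a b)) (v : E) :
    ∫ u in a..b, ψ' u • φ u = (ψ b - ψ a) • φ a
      + ((b - a) / 2 * (ψ b - ψ a) + ∫ u in a..b, ψ' u * (u - (a + b) / 2)) • v
      + ∫ u in a..b, ψ' u • (φ u - φ a - (u - a) • v) := by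
  rw [← uIcc_of_le hab] at hψ hψ' hφ
  have hftc : ∫ u in a..b, ψ' u = ψ b - ψ a :=
    integral_eq_sub_of_hasDerivAt hψ hψ'.intervalIntegrable
  have hsplit : ∀ u, ψ' u • (φ u - φ a - (u - a) • v)
      = ψ' u • φ u - (ψ' u • φ a + ((b - a) / 2 * ψ' u + ψ' u * (u - (a + b) / 2)) • v) := by
    intro u
    rw [smul_sub, smul_sub, smul_smul, sub_sub]
    congr 3
    ring
  have hI₁ : IntervalIntegrable (fun u => ψ' u • φ u) MeasureTheory.volume a b :=
    (hψ'.smul hφ).intervalIntegrable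
  have hI₂ : IntervalIntegrable (fun u => ψ' u • φ a) MeasureTheory.volume a b :=
    (hψ'.smul continuousOn_const).intervalIntegrable
  have hI₃ : IntervalIntegrable (fun u => (b - a) / 2 * ψ' u) MeasureTheory.volume a b :=
    hψ'.intervalIntegrable.const_mul _
  have hI₄ : IntervalIntegrable (fun u => ψ' u * (u - (a + b) / 2)) MeasureTheory.volume a b :=
    (hψ'.mul (by fun_prop)).intervalIntegrable
  have hI₅ : IntervalIntegrable (fun u => ((b - a) / 2 * ψ' u + ψ' u * (u - (a + b) / 2)) • v)
      MeasureTheory.volume a b :=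
    (((continuousOn_const.mul hψ').add (hψ'.mul (by fun_prop))).smul
      continuousOn_const).intervalIntegrable
  simp only [hsplit]
  rw [integral_sub hI₁ (hI₂.add hI₅), integral_add hI₂ hI₅,
    intervalIntegral.integral_smul_const, intervalIntegral.integral_smul_const,
    integral_add hI₃ hI₄, integral_const_mul, hftc]
  abel

theorem norm_predictor_error_le {Δ μ κ h hₘ K₁ K₂ M₁ M₂ : ℝ} {x v y J : E} (hh : 0 < h)
    (hhₘ : 0 < hₘ) (hΔ : |Δ| ≤ K₁ * h) (hμ : |μ| ≤ K₂ * h ^ 3 / 12)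
    (hJ : ‖J‖ ≤ K₁ * M₂ * h ^ 3 / 6) (hv : ‖v‖ ≤ M₁) (hy : ‖y - hₘ • v‖ ≤ M₂ * hₘ ^ 2 / 2) :
    ‖(Δ • x + (h / 2 * Δ + μ) • v + J) - (Δ • x + ((Δ + κ * h ^ 2) / (2 * (hₘ / h))) • y)‖
      ≤ (M₁ * K₂ / 4 + |κ| * M₁ / 2 + K₁ * M₂ / 6) * h ^ 3
        + (M₂ * hₘ / 4) * (K₁ * h ^ 2 + |κ| * h ^ 3) := by
  set c := (Δ + κ * h ^ 2) / (2 * (hₘ / h))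
  have hc : c * hₘ = (Δ + κ * h ^ 2) * h / 2 := by
    simp only [c]
    field_simp
  have hsplit : (Δ • x + (h / 2 * Δ + μ) • v + J) - (Δ • x + c • y)
      = J + (μ - κ * h ^ 3 / 2) • v - c • (y - hₘ • v) := by
    rw [smul_sub, smul_smul, hc]
    module
  have hcoef : |μ - κ * h ^ 3 / 2| ≤ K₂ * h ^ 3 / 12 + |κ| * h ^ 3 / 2 := by
    refine (abs_sub _ _).trans (add_le_add hμ (le_of_eq ?_))
    rw [abs_div, abs_mul, abs_of_pos (pow_pos hh 3), abs_two]
  have hcy : |c| * ‖y - hₘ • v‖ ≤ M₂ * hₘ / 4 * (K₁ * h ^ 2 + |κ| * h ^ 3) := by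
    have hnum : |Δ + κ * h ^ 2| ≤ K₁ * h + |κ| * h ^ 2 := by
      refine (abs_add_le _ _).trans (add_le_add hΔ (le_of_eq ?_))
      rw [abs_mul, abs_of_nonneg (sq_nonneg h)]
    calc |c| * ‖y - hₘ • v‖ ≤ (K₁ * h + |κ| * h ^ 2) / (2 * (hₘ / h)) * (M₂ * hₘ ^ 2 / 2) := by
          rw [abs_div, abs_of_pos (by positivity : 0 < 2 * (hₘ / h))]
          gcongr
          exact div_nonneg ((abs_nonneg _).trans hnum) (by positivity)
      _ = M₂ * hₘ / 4 * (K₁ * h ^ 2 + |κ| * h ^ 3) := by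
          field_simp
          ring
  rw [hsplit]
  calc _ ≤ ‖J‖ + |μ - κ * h ^ 3 / 2| * ‖v‖ + |c| * ‖y - hₘ • v‖ := by
        refine (norm_sub_le _ _).trans (add_le_add ((norm_add_le _ _).trans_eq ?_) ?_) <;>
          rw [norm_smul, Real.norm_eq_abs]
    _ ≤ K₁ * M₂ * h ^ 3 / 6 + (K₂ * h ^ 3 / 12 + |κ| * h ^ 3 / 2) * M₁
        + M₂ * hₘ / 4 * (K₁ * h ^ 2 + |κ| * h ^ 3) := by
        gcongr
        exact (abs_nonneg _).trans hcoef
    _ ≤ _ := by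
        -- the midpoint moment gives `K₂ / 12`, within the `K₂ / 4` of the claim
        nlinarith [(abs_nonneg μ).trans hμ, (norm_nonneg v).trans hv, pow_pos hh 3]

end

/-- Local truncation error of (the u-component of) the second-order
backward-difference predictor of Dual-Solver. -/
theorem dual_solver_second_order_predictor_lte
    {E : Type*} [NormedAddCommGroup E] [NormedSpace ℝ E] [CompleteSpace E]
    (aₘ a b : ℝ) (h₁ : aₘ < a) (h₂ : a < b)
    (ψ ψ' ψ'' : ℝ → ℝ) (φ φ' φ'' : ℝ → E)
    (K₁ K₂ M₁ M₂ κ : ℝ)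
    (hψ : ∀ u ∈ Set.Icc aₘ b, HasDerivAt ψ (ψ' u) u)
    (hψ' : ∀ u ∈ Set.Icc aₘ b, HasDerivAt ψ' (ψ'' u) u)
    (hK₁ : ∀ u ∈ Set.Icc a b, |ψ' u| ≤ K₁)
    (hK₂ : ∀ u ∈ Set.Icc a b, |ψ'' u| ≤ K₂)
    (hφ : ∀ u ∈ Set.Icc aₘ b, HasDerivAt φ (φ' u) u)
    (hφ' : ∀ u ∈ Set.Icc aₘ b, HasDerivAt φ' (φ'' u) u)
    (hM₁ : ∀ u ∈ Set.Icc aₘ b, ‖φ' u‖ ≤ M₁)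
    (hM₂ : ∀ u ∈ Set.Icc aₘ b, ‖φ'' u‖ ≤ M₂) :
    ‖(∫ u in a..b, ψ' u • φ u)
      - ((ψ b - ψ a) • φ a
          + (((ψ b - ψ a) + κ * (b - a) ^ 2) / (2 * ((a - aₘ) / (b - a)))) • (φ a - φ aₘ))‖
    ≤ (M₁ * K₂ / 4 + |κ| * M₁ / 2 + K₁ * M₂ / 6) * (b - a) ^ 3
        + (M₂ * (a - aₘ) / 4) * (K₁ * (b - a) ^ 2 + |κ| * (b - a) ^ 3) := by
  have hsub : Icc a b ⊆ Icc aₘ b := Icc_subset_Icc_left h₁.le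
  have ha : a ∈ Icc aₘ b := ⟨h₁.le, h₂.le⟩
  have hψab (u) (hu : u ∈ Icc a b) := hψ u (hsub hu)
  have hφab (u) (hu : u ∈ Icc a b) := hφ u (hsub hu)
  rw [integral_smul_eq_moment_add_remainder h₂.le hψab
    (HasDerivAt.continuousOn fun u hu => hψ' u (hsub hu)) (HasDerivAt.continuousOn hφab) (φ' a)]
  refine norm_predictor_error_le (sub_pos.2 h₂) (sub_pos.2 h₁) ?_
    (abs_integral_mul_sub_midpoint_le h₂.le (fun u hu => hψ' u (hsub hu)) hK₂)
    (norm_integral_smul_taylor_remainder_le h₂.le hφab (fun u hu => hφ' u (hsub hu))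
      (fun u hu => hM₂ u (hsub hu)) hK₁) (hM₁ a ha) ?_
  · simpa [Real.norm_eq_abs, abs_of_pos (sub_pos.2 h₂)] using
      (convex_Icc a b).norm_image_sub_le_of_norm_hasDerivWithin_le
        (fun u hu => (hψab u hu).hasDerivWithinAt) hK₁ (left_mem_Icc.2 h₂.le)
        (right_mem_Icc.2 h₂.le)
  · convert norm_taylor_remainder_le (convex_Icc aₘ b) hφ hφ' hM₂ ha ⟨le_rfl, (h₁.trans h₂).le⟩
      using 1
    · rw [← norm_neg]
      congr 1
      module
    · ring
end

section
/- Let E be a real Banach space, let a_u < b_u and a_v < b_v be real numbers, and set h_u = b_u - a_u, h_v = b_v - a_v. Let ψ_u, ψ_v : ℝ → ℝ be twice differentiable with |ψ_u'| ≤ K₁ᵘ, |ψ_u''| ≤ K₂ᵘ on [a_u, b_u] and |ψ_v'| ≤ K₁ᵛ, |ψ_v''| ≤ K₂ᵛ on [a_v, b_v], and let φ, ε : ℝ → E be twice differentiable with ‖φ'‖ ≤ M₁ᵘ, ‖φ''‖ ≤ M₂ᵘ on [a_u, b_u] and ‖ε'‖ ≤ M₁ᵛ, ‖ε''‖ ≤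 M₂ᵛ on [a_v, b_v]. Fix A, B, κ_u, κ_v ∈ ℝ and x_i ∈ E, write Δψ_u = ψ_u(b_u) - ψ_u(a_u), Δφ = φ(b_u) - φ(a_u), Δψ_v = ψ_v(b_v) - ψ_v(a_v), Δε = ε(b_v) - ε(a_v), and define the exact update X = A•x_i + B•(∫_{a_u}^{b_u} ψ_u'(u)•φ(u) du + ∫_{a_v}^{b_v} ψ_v'(v)•ε(v) dv) and the second-order corrector X₂ = A•x_i + B•(Δψ_u•φ(a_u) + ((Δψ_u + κ_u h_u²)/2)•Δφ + Δψ_v•ε(a_v) + ((Δψ_v + κ_v h_v²)/2)•Δε). Then ‖X - X₂‖ ≤ |B| · ((M₁ᵘK₂ᵘ + K₁ᵘM₂ᵘ + |κ_u|M₁ᵘ) h_u³ + (M₁ᵛK₂ᵛ + K₁ᵛM₂ᵛ + |κ_v|M₁ᵛ) h_v³); in particular the local truncation error of the second-order corrector is O(h_u³ + h_v³). -/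
/-!
Write `h = b - a` and `s = slope ψ a b`. Since `∫ (u - a) = h² / 2`, the error of the corrector
with `κ = 0` is `∫ (ψ' u - s) • (φ u - φ a) + s • (φ u - φ a - (u - a) • slope φ a b)`. In the
integrand `ψ' u - s = O(K₂ h)`, `φ u - φ a = O(M₁ h)`, `|s| ≤ K₁`, and the deviation of `φ` from
its chord is `O(M₂ h²)`; the residual adds `|κ| h² / 2 · M₁ h`. Each of these bounds is an
instance of the mean value inequality, so no mean value theorem (false for Banach-space valued `φ`)
is needed.
-/

open Set

section

variable {F : Type*} [NormedAddCommGroup F] [NormedSpace ℝ F] {a b : ℝ}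

theorem norm_sub_le_of_hasDerivAt_Icc {f f' : ℝ → F} {C : ℝ}
    (hf : ∀ x ∈ Icc a b, HasDerivAt f (f' x) x) (hC : ∀ x ∈ Icc a b, ‖f' x‖ ≤ C)
    {x y : ℝ} (hx : x ∈ Icc a b) (hy : y ∈ Icc a b) : ‖f y - f x‖ ≤ C * (b - a) :=
  calc ‖f y - f x‖ ≤ C * ‖y - x‖ :=
        (convex_Icc a b).norm_image_sub_le_of_norm_hasDerivWithin_le
          (fun z hz => (hf z hz).hasDerivWithinAt) hC hx hy
    _ ≤ C * (b - a) := by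
        gcongr
        · exact (norm_nonneg _).trans (hC x hx)
        · rw [Real.norm_eq_abs, abs_le]
          constructor <;> linarith [hx.1, hx.2, hy.1, hy.2]

theorem norm_slope_le_of_hasDerivAt_Icc {f f' : ℝ → F} {C : ℝ} (hab : a < b)
    (hf : ∀ x ∈ Icc a b, HasDerivAt f (f' x) x) (hC : ∀ x ∈ Icc a b, ‖f' x‖ ≤ C) :
    ‖slope f a b‖ ≤ C := by
  have hh : 0 < b - a := sub_pos.mpr hab
  rw [slope_def_module, norm_smul, norm_inv, Real.norm_of_nonneg hh.le, inv_mul_le_iff₀ hh,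
    mul_comm]
  exact norm_sub_le_of_hasDerivAt_Icc hf hC (left_mem_Icc.mpr hab.le) (right_mem_Icc.mpr hab.le)

theorem norm_slope_sub_le_of_hasDerivAt_Icc {f f' f'' : ℝ → F} {M : ℝ} (hab : a < b)
    (hf : ∀ x ∈ Icc a b, HasDerivAt f (f' x) x) (hf' : ∀ x ∈ Icc a b, HasDerivAt f' (f'' x) x)
    (hM : ∀ x ∈ Icc a b, ‖f'' x‖ ≤ M) {x : ℝ} (hx : x ∈ Icc a b) :
    ‖slope f a b - f' x‖ ≤ M * (b - a) := by
  have hslope : slope (fun s => f s - s • f' x) a b = slope f a b - f' x := by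
    rw [slope_def_module, slope_def_module, sub_sub_sub_comm, ← sub_smul, smul_sub, smul_smul,
      inv_mul_cancel₀ (sub_pos.mpr hab).ne', one_smul]
  rw [← hslope]
  exact norm_slope_le_of_hasDerivAt_Icc hab
    (fun s hs => (hf s hs).sub ((hasDerivAt_id s).smul_const (f' x)))
    (fun s hs => by simpa using norm_sub_le_of_hasDerivAt_Icc hf' hM hx hs)

theorem norm_sub_sub_smul_slope_le {f f' f'' : ℝ → F} {M : ℝ} (hab : a < b)
    (hf : ∀ x ∈ Icc a b, HasDerivAt f (f' x) x) (hf' : ∀ x ∈ Icc a b, HasDerivAt f' (f'' x) x)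
    (hM : ∀ x ∈ Icc a b, ‖f'' x‖ ≤ M) {u : ℝ} (hu : u ∈ Icc a b) :
    ‖f u - f a - (u - a) • slope f a b‖ ≤ M * (b - a) ^ 2 := by
  have hG : ∀ s ∈ Icc a b,
      HasDerivAt (fun s => f s - (s - a) • slope f a b) (f' s - slope f a b) s := fun s hs =>
    ((hf s hs).sub (((hasDerivAt_id s).sub_const a).smul_const _)).congr_deriv (by rw [one_smul])
  have hG' : ∀ s ∈ Icc a b, ‖f' s - slope f a b‖ ≤ M * (b - a) := fun s hs => by
    rw [norm_sub_rev]; exact norm_slope_sub_le_of_hasDerivAt_Icc hab hf hf' hM hs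
  have := norm_sub_le_of_hasDerivAt_Icc hG hG' (left_mem_Icc.mpr hab.le) hu
  rwa [sub_self, zero_smul, sub_zero, sub_right_comm, mul_assoc, ← sq] at this

noncomputable def secondOrderCorrector (ψ : ℝ → ℝ) (φ : ℝ → F) (κ a b : ℝ) : F :=
  (ψ b - ψ a) • φ a + ((ψ b - ψ a + κ * (b - a) ^ 2) / 2) • (φ b - φ a)

theorem integral_smul_sub_secondOrderCorrector_zero {ψ ψ' : ℝ → ℝ} {φ : ℝ → F} [CompleteSpace F]
    (hψ : ∀ x ∈ uIcc a b, HasDerivAt ψ (ψ' x) x) (hψ' : ContinuousOn ψ' (uIcc a b))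
    (hφ : ContinuousOn φ (uIcc a b)) :
    (∫ u in a..b, ψ' u • φ u) - secondOrderCorrector ψ φ 0 a b =
      ∫ u in a..b, ((ψ' u - slope ψ a b) • (φ u - φ a) +
        slope ψ a b • (φ u - φ a - (u - a) • slope φ a b)) := by
  rcases eq_or_ne a b with rfl | hab
  · simp [secondOrderCorrector]
  have hcoef : ((b - a) ^ 2 / 2 * slope ψ a b) • slope φ a b = ((ψ b - ψ a) / 2) • (φ b - φ a) := by
    have hh : b - a ≠ 0 := sub_ne_zero.mpr hab.symm
    rw [slope_def_module, slope_def_module, smul_eq_mul, smul_smul]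
    congr 1
    field_simp
  calc (∫ u in a..b, ψ' u • φ u) - secondOrderCorrector ψ φ 0 a b
      = (∫ u in a..b, ψ' u • φ u) - (∫ u in a..b, ψ' u • φ a)
          - ∫ u in a..b, ((u - a) * slope ψ a b) • slope φ a b := by
        rw [intervalIntegral.integral_smul_const, intervalIntegral.integral_smul_const,
          intervalIntegral.integral_eq_sub_of_hasDerivAt hψ hψ'.intervalIntegrable,
          intervalIntegral.integral_mul_const,
          intervalIntegral.integral_comp_sub_right (fun x => x), integral_id, sub_self,
          zero_pow two_ne_zero, sub_zero, hcoef]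
        unfold secondOrderCorrector
        module
    _ = _ := by
        rw [← intervalIntegral.integral_sub, ← intervalIntegral.integral_sub]
        · congr 1; funext u; module
        all_goals exact ContinuousOn.intervalIntegrable (by fun_prop)

theorem norm_integral_sub_secondOrderCorrector_le [CompleteSpace F] {ψ ψ' ψ'' : ℝ → ℝ}
    {φ φ' φ'' : ℝ → F} {K₁ K₂ M₁ M₂ : ℝ} (κ : ℝ) (hab : a < b)
    (hψ : ∀ u ∈ Icc a b, HasDerivAt ψ (ψ' u) u) (hψ' : ∀ u ∈ Icc a b, HasDerivAt ψ' (ψ'' u) u)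
    (hK₁ : ∀ u ∈ Icc a b, |ψ' u| ≤ K₁) (hK₂ : ∀ u ∈ Icc a b, |ψ'' u| ≤ K₂)
    (hφ : ∀ u ∈ Icc a b, HasDerivAt φ (φ' u) u) (hφ' : ∀ u ∈ Icc a b, HasDerivAt φ' (φ'' u) u)
    (hM₁ : ∀ u ∈ Icc a b, ‖φ' u‖ ≤ M₁) (hM₂ : ∀ u ∈ Icc a b, ‖φ'' u‖ ≤ M₂) :
    ‖(∫ u in a..b, ψ' u • φ u) - secondOrderCorrector ψ φ κ a b‖ ≤
      (M₁ * K₂ + K₁ * M₂ + |κ| * M₁) * (b - a) ^ 3 := by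
  simp only [← Real.norm_eq_abs] at hK₁ hK₂
  have hI : uIcc a b = Icc a b := uIcc_of_le hab.le
  have ha : a ∈ Icc a b := left_mem_Icc.mpr hab.le
  have hh : 0 < b - a := sub_pos.mpr hab
  have hsplit : (∫ u in a..b, ψ' u • φ u) - secondOrderCorrector ψ φ κ a b =
      ((∫ u in a..b, ψ' u • φ u) - secondOrderCorrector ψ φ 0 a b) -
        (κ * (b - a) ^ 2 / 2) • (φ b - φ a) := by
    unfold secondOrderCorrector; module
  rw [hsplit, integral_smul_sub_secondOrderCorrector_zero (hI ▸ hψ)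
    (hI ▸ HasDerivAt.continuousOn hψ') (hI ▸ HasDerivAt.continuousOn hφ)]
  have hintegrand : ∀ u ∈ uIoc a b, ‖(ψ' u - slope ψ a b) • (φ u - φ a) +
      slope ψ a b • (φ u - φ a - (u - a) • slope φ a b)‖ ≤
        K₂ * (b - a) * (M₁ * (b - a)) + K₁ * (M₂ * (b - a) ^ 2) := fun u hu => by
    have hu : u ∈ Icc a b := hI ▸ uIoc_subset_uIcc hu
    have h₁ : ‖ψ' u - slope ψ a b‖ ≤ K₂ * (b - a) := by
      rw [norm_sub_rev]; exact norm_slope_sub_le_of_hasDerivAt_Icc hab hψ hψ' hK₂ hu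
    have h₂ : ‖φ u - φ a‖ ≤ M₁ * (b - a) := norm_sub_le_of_hasDerivAt_Icc hφ hM₁ ha hu
    have h₃ : ‖slope ψ a b‖ ≤ K₁ := norm_slope_le_of_hasDerivAt_Icc hab hψ hK₁
    have h₄ := norm_sub_sub_smul_slope_le hab hφ hφ' hM₂ hu
    calc _ ≤ ‖ψ' u - slope ψ a b‖ * ‖φ u - φ a‖ +
          ‖slope ψ a b‖ * ‖φ u - φ a - (u - a) • slope φ a b‖ := by
          grw [norm_add_le, norm_smul, norm_smul]
      _ ≤ _ := by
          gcongr
          · exact (norm_nonneg _).trans h₁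
          · exact (norm_nonneg _).trans h₃
  have hcorr : ‖(κ * (b - a) ^ 2 / 2) • (φ b - φ a)‖ ≤ |κ| * (b - a) ^ 2 / 2 * (M₁ * (b - a)) := by
    rw [norm_smul, Real.norm_eq_abs, abs_div, abs_mul, abs_pow, abs_of_pos hh, abs_two]
    gcongr
    exact norm_sub_le_of_hasDerivAt_Icc hφ hM₁ ha (right_mem_Icc.mpr hab.le)
  have hκM₁ : 0 ≤ |κ| * M₁ * (b - a) ^ 3 := by
    have := (norm_nonneg _).trans (hM₁ a ha)
    positivity
  calc _ ≤ _ := norm_sub_le _ _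
    _ ≤ (K₂ * (b - a) * (M₁ * (b - a)) + K₁ * (M₂ * (b - a) ^ 2)) * (b - a) +
          |κ| * (b - a) ^ 2 / 2 * (M₁ * (b - a)) := by
        grw [intervalIntegral.norm_integral_le_of_norm_le_const hintegrand, abs_of_pos hh, hcorr]
    _ ≤ _ := by linarith

end

/-- Local truncation error of the second-order corrector of Dual-Solver. -/
theorem dual_solver_second_order_corrector_lte
    {E : Type*} [NormedAddCommGroup E] [NormedSpace ℝ E] [CompleteSpace E]
    (a_u b_u a_v b_v : ℝ) (hab_u : a_u < b_u) (hab_v : a_v < b_v)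
    (ψu ψu' ψu'' ψv ψv' ψv'' : ℝ → ℝ) (φ φ' φ'' ε ε' ε'' : ℝ → E)
    (K₁u K₂u K₁v K₂v M₁u M₂u M₁v M₂v : ℝ)
    (hψu : ∀ u ∈ Set.Icc a_u b_u, HasDerivAt ψu (ψu' u) u)
    (hψu' : ∀ u ∈ Set.Icc a_u b_u, HasDerivAt ψu' (ψu'' u) u)
    (hK₁u : ∀ u ∈ Set.Icc a_u b_u, |ψu' u| ≤ K₁u)
    (hK₂u : ∀ u ∈ Set.Icc a_u b_u, |ψu'' u| ≤ K₂u)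
    (hψv : ∀ v ∈ Set.Icc a_v b_v, HasDerivAt ψv (ψv' v) v)
    (hψv' : ∀ v ∈ Set.Icc a_v b_v, HasDerivAt ψv' (ψv'' v) v)
    (hK₁v : ∀ v ∈ Set.Icc a_v b_v, |ψv' v| ≤ K₁v)
    (hK₂v : ∀ v ∈ Set.Icc a_v b_v, |ψv'' v| ≤ K₂v)
    (hφ : ∀ u ∈ Set.Icc a_u b_u, HasDerivAt φ (φ' u) u)
    (hφ' : ∀ u ∈ Set.Icc a_u b_u, HasDerivAt φ' (φ'' u) u)
    (hM₁u : ∀ u ∈ Set.Icc a_u b_u, ‖φ' u‖ ≤ M₁u)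
    (hM₂u : ∀ u ∈ Set.Icc a_u b_u, ‖φ'' u‖ ≤ M₂u)
    (hε : ∀ v ∈ Set.Icc a_v b_v, HasDerivAt ε (ε' v) v)
    (hε' : ∀ v ∈ Set.Icc a_v b_v, HasDerivAt ε' (ε'' v) v)
    (hM₁v : ∀ v ∈ Set.Icc a_v b_v, ‖ε' v‖ ≤ M₁v)
    (hM₂v : ∀ v ∈ Set.Icc a_v b_v, ‖ε'' v‖ ≤ M₂v)
    (A B κu κv : ℝ) (x_i : E) :
    ‖(A • x_i + B • ((∫ u in a_u..b_u, ψu' u • φ u) + ∫ v in a_v..b_v, ψv' v • ε v))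
      - (A • x_i + B • ((ψu b_u - ψu a_u) • φ a_u
          + (((ψu b_u - ψu a_u) + κu * (b_u - a_u) ^ 2) / 2) • (φ b_u - φ a_u)
          + (ψv b_v - ψv a_v) • ε a_v
          + (((ψv b_v - ψv a_v) + κv * (b_v - a_v) ^ 2) / 2) • (ε b_v - ε a_v)))‖
    ≤ |B| * ((M₁u * K₂u + K₁u * M₂u + |κu| * M₁u) * (b_u - a_u) ^ 3
        + (M₁v * K₂v + K₁v * M₂v + |κv| * M₁v) * (b_v - a_v) ^ 3) := by
  have hu := norm_integral_sub_secondOrderCorrector_le κu hab_u hψu hψu' hK₁u hK₂u hφ hφ' hM₁u hM₂u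
  have hv := norm_integral_sub_secondOrderCorrector_le κv hab_v hψv hψv' hK₁v hK₂v hε hε' hM₁v hM₂v
  have hsplit : (A • x_i + B • ((∫ u in a_u..b_u, ψu' u • φ u) + ∫ v in a_v..b_v, ψv' v • ε v))
      - (A • x_i + B • ((ψu b_u - ψu a_u) • φ a_u
          + (((ψu b_u - ψu a_u) + κu * (b_u - a_u) ^ 2) / 2) • (φ b_u - φ a_u)
          + (ψv b_v - ψv a_v) • ε a_v
          + (((ψv b_v - ψv a_v) + κv * (b_v - a_v) ^ 2) / 2) • (ε b_v - ε a_v))) =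
      B • (((∫ u in a_u..b_u, ψu' u • φ u) - secondOrderCorrector ψu φ κu a_u b_u) +
        ((∫ v in a_v..b_v, ψv' v • ε v) - secondOrderCorrector ψv ε κv a_v b_v)) := by
    unfold secondOrderCorrector; module
  rw [hsplit, norm_smul, Real.norm_eq_abs]
  gcongr
  exact (norm_add_le _ _).trans (add_le_add hu hv)
end

section
/- Let E be a real Banach space, a < b real numbers, ψ : ℝ → ℝ twice differentiable on [a, b] with |ψ'(u)| ≤ K₁ and |ψ''(u)| ≤ K₂ on [a, b], and φ : ℝ → E twice differentiable on [a, b] with ‖φ'(u)‖ ≤ M₁ and ‖φ''(u)‖ ≤ M₂ on [a, b]. Write Δψ = ψ(b) − ψ(a) and Δφ = φ(b) − φ(a). Then ‖∫_a^b ψ'(u)•φ(u) du − Δψ•φ(a) − (Δψ/2)•Δφ‖ ≤ ((M₁K₂ + K₁M₂)/2)(b − a)³. -/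
/-!
Integrating `∫ (ψ - ψ a) • φ'` by parts shows that the error is
`½ ∫ (ψ' • (φ - φ a) - (ψ - ψ a) • φ')`. At `t` this integrand equals
`ψ' t • (φ t - φ a - (t - a) • φ' t) - (ψ t - ψ a - (t - a) • ψ' t) • φ' t`, where both brackets
are first-order Taylor remainders expanded at `t`, hence `O((t - a)²)` by the mean value
inequality; integrating over `[a, b]` gives `O((b - a)³)`.
-/

open Set MeasureTheory intervalIntegral

theorem norm_sub_sub_smul_deriv_le {F : Type*} [NormedAddCommGroup F] [NormedSpace ℝ F]
    {f f' f'' : ℝ → F} {a t M : ℝ} (hat : a ≤ t)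
    (hf : ∀ u ∈ Icc a t, HasDerivAt f (f' u) u)
    (hf' : ∀ u ∈ Icc a t, HasDerivAt f' (f'' u) u)
    (hM : ∀ u ∈ Icc a t, ‖f'' u‖ ≤ M) :
    ‖f t - f a - (t - a) • f' t‖ ≤ M * (t - a) ^ 2 := by
  have ht : t ∈ Icc a t := right_mem_Icc.2 hat
  have hM0 : 0 ≤ M := (norm_nonneg _).trans (hM t ht)
  have hlip : ∀ s ∈ Icc a t, ‖f' s - f' t‖ ≤ M * (t - a) := by
    intro s hs
    calc ‖f' s - f' t‖ ≤ M * ‖s - t‖ :=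
          (convex_Icc a t).norm_image_sub_le_of_norm_hasDerivWithin_le
            (fun u hu => (hf' u hu).hasDerivWithinAt) hM ht hs
      _ ≤ M * (t - a) := by
          gcongr
          rw [Real.norm_eq_abs, abs_sub_comm, abs_of_nonneg (by linarith [hs.2])]
          linarith [hs.1]
  have hderiv : ∀ s ∈ Icc a t,
      HasDerivWithinAt (fun s => f s - s • f' t) (f' s - f' t) (Icc a t) s := fun s hs => by
    have := ((hf s hs).sub ((hasDerivAt_id s).smul_const (f' t))).hasDerivWithinAt (s := Icc a t)
    rwa [one_smul] at this
  have key := (convex_Icc a t).norm_image_sub_le_of_norm_hasDerivWithin_le hderiv hlip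
    (left_mem_Icc.2 hat) ht
  rw [Real.norm_eq_abs, abs_of_nonneg (sub_nonneg.2 hat)] at key
  calc ‖f t - f a - (t - a) • f' t‖ = ‖(f t - t • f' t) - (f a - a • f' t)‖ := by
        rw [sub_smul]; abel_nf
    _ ≤ M * (t - a) ^ 2 := by linarith

theorem norm_deriv_smul_sub_sub_smul_deriv_le {E : Type*} [NormedAddCommGroup E]
    [NormedSpace ℝ E] {ψ ψ' ψ'' : ℝ → ℝ} {φ φ' φ'' : ℝ → E} {a t K₁ K₂ M₁ M₂ : ℝ} (hat : a ≤ t)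
    (hψ : ∀ u ∈ Icc a t, HasDerivAt ψ (ψ' u) u)
    (hψ' : ∀ u ∈ Icc a t, HasDerivAt ψ' (ψ'' u) u)
    (hK₁ : |ψ' t| ≤ K₁) (hK₂ : ∀ u ∈ Icc a t, |ψ'' u| ≤ K₂)
    (hφ : ∀ u ∈ Icc a t, HasDerivAt φ (φ' u) u)
    (hφ' : ∀ u ∈ Icc a t, HasDerivAt φ' (φ'' u) u)
    (hM₁ : ‖φ' t‖ ≤ M₁) (hM₂ : ∀ u ∈ Icc a t, ‖φ'' u‖ ≤ M₂) :
    ‖ψ' t • (φ t - φ a) - (ψ t - ψ a) • φ' t‖ ≤ (K₁ * M₂ + K₂ * M₁) * (t - a) ^ 2 := by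
  have hφ_rem := norm_sub_sub_smul_deriv_le hat hφ hφ' hM₂
  have hψ_rem := norm_sub_sub_smul_deriv_le hat hψ hψ' hK₂
  have hK₂0 : 0 ≤ K₂ := (abs_nonneg _).trans (hK₂ t (right_mem_Icc.2 hat))
  calc ‖ψ' t • (φ t - φ a) - (ψ t - ψ a) • φ' t‖
        = ‖ψ' t • (φ t - φ a - (t - a) • φ' t) - (ψ t - ψ a - (t - a) • ψ' t) • φ' t‖ := by
          congr 1; simp only [smul_eq_mul]; module
    _ ≤ |ψ' t| * ‖φ t - φ a - (t - a) • φ' t‖ + ‖ψ t - ψ a - (t - a) • ψ' t‖ * ‖φ' t‖ := by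
          rw [← Real.norm_eq_abs, ← norm_smul, ← norm_smul]; exact norm_sub_le _ _
    _ ≤ K₁ * (M₂ * (t - a) ^ 2) + K₂ * (t - a) ^ 2 * M₁ := by
          gcongr
          exact (abs_nonneg _).trans hK₁
    _ = (K₁ * M₂ + K₂ * M₁) * (t - a) ^ 2 := by ring

theorem integral_deriv_smul_sub_trapezoid_eq {E : Type*} [NormedAddCommGroup E]
    [NormedSpace ℝ E] [CompleteSpace E] {ψ ψ' : ℝ → ℝ} {φ φ' : ℝ → E} {a b : ℝ}
    (hψ : ∀ u ∈ uIcc a b, HasDerivAt ψ (ψ' u) u) (hφ : ∀ u ∈ uIcc a b, HasDerivAt φ (φ' u) u)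
    (hψ' : IntervalIntegrable ψ' volume a b) (hφ' : IntervalIntegrable φ' volume a b) :
    (∫ u in a..b, ψ' u • φ u) - (ψ b - ψ a) • φ a - ((ψ b - ψ a) / 2) • (φ b - φ a)
      = (2⁻¹ : ℝ) • ∫ u in a..b, ψ' u • (φ u - φ a) - (ψ u - ψ a) • φ' u := by
  have hφc : ContinuousOn φ (uIcc a b) := HasDerivAt.continuousOn hφ
  have hψc : ContinuousOn ψ (uIcc a b) := HasDerivAt.continuousOn hψ
  have hparts : ∫ u in a..b, (ψ u - ψ a) • φ' u
      = (ψ b - ψ a) • φ b - (ψ a - ψ a) • φ a - ∫ u in a..b, ψ' u • φ u :=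
    integral_smul_deriv_eq_deriv_smul (fun u hu => (hψ u hu).sub_const _) hφ hψ' hφ'
  have h₁ : IntervalIntegrable (fun u => ψ' u • (φ u - φ a)) volume a b :=
    hψ'.smul_continuousOn (hφc.sub continuousOn_const)
  have h₂ : IntervalIntegrable (fun u => (ψ u - ψ a) • φ' u) volume a b :=
    hφ'.continuousOn_smul (hψc.sub continuousOn_const)
  have hΔψ : ∫ u in a..b, ψ' u = ψ b - ψ a := integral_eq_sub_of_hasDerivAt hψ hψ'
  have hfirst : ∫ u in a..b, ψ' u • (φ u - φ a)
      = (∫ u in a..b, ψ' u • φ u) - (ψ b - ψ a) • φ a := by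
    simp_rw [smul_sub]
    rw [integral_sub (hψ'.smul_continuousOn hφc) (hψ'.smul_continuousOn continuousOn_const),
      intervalIntegral.integral_smul_const, hΔψ]
  rw [integral_sub h₁ h₂, hparts, hfirst]
  module

theorem norm_integral_deriv_smul_sub_sub_smul_deriv_le {E : Type*} [NormedAddCommGroup E]
    [NormedSpace ℝ E] {ψ ψ' ψ'' : ℝ → ℝ} {φ φ' φ'' : ℝ → E}
    {a b K₁ K₂ M₁ M₂ : ℝ} (hab : a ≤ b)
    (hψ : ∀ u ∈ Icc a b, HasDerivAt ψ (ψ' u) u)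
    (hψ' : ∀ u ∈ Icc a b, HasDerivAt ψ' (ψ'' u) u)
    (hK₁ : ∀ u ∈ Icc a b, |ψ' u| ≤ K₁) (hK₂ : ∀ u ∈ Icc a b, |ψ'' u| ≤ K₂)
    (hφ : ∀ u ∈ Icc a b, HasDerivAt φ (φ' u) u)
    (hφ' : ∀ u ∈ Icc a b, HasDerivAt φ' (φ'' u) u)
    (hM₁ : ∀ u ∈ Icc a b, ‖φ' u‖ ≤ M₁) (hM₂ : ∀ u ∈ Icc a b, ‖φ'' u‖ ≤ M₂) :
    ‖∫ u in a..b, ψ' u • (φ u - φ a) - (ψ u - ψ a) • φ' u‖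
      ≤ (K₁ * M₂ + K₂ * M₁) * (b - a) ^ 3 := by
  have restrict {P : ℝ → Prop} (h : ∀ u ∈ Icc a b, P u) (t : ℝ) (ht : t ∈ Icc a b) :
      ∀ u ∈ Icc a t, P u := fun u hu => h u (Icc_subset_Icc_right ht.2 hu)
  have hbound : ∀ t ∈ uIoc a b, ‖ψ' t • (φ t - φ a) - (ψ t - ψ a) • φ' t‖
      ≤ (K₁ * M₂ + K₂ * M₁) * (b - a) ^ 2 := by
    intro t ht
    rw [uIoc_of_le hab] at ht
    have ht' : t ∈ Icc a b := Ioc_subset_Icc_self ht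
    have hM₂0 : 0 ≤ M₂ := (norm_nonneg _).trans (hM₂ t ht')
    have hK₂0 : 0 ≤ K₂ := (abs_nonneg _).trans (hK₂ t ht')
    have hK₁0 : 0 ≤ K₁ := (abs_nonneg _).trans (hK₁ t ht')
    have hM₁0 : 0 ≤ M₁ := (norm_nonneg _).trans (hM₁ t ht')
    calc _ ≤ (K₁ * M₂ + K₂ * M₁) * (t - a) ^ 2 :=
          norm_deriv_smul_sub_sub_smul_deriv_le ht.1.le (restrict hψ t ht') (restrict hψ' t ht')
            (hK₁ t ht') (restrict hK₂ t ht') (restrict hφ t ht') (restrict hφ' t ht')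
            (hM₁ t ht') (restrict hM₂ t ht')
      _ ≤ (K₁ * M₂ + K₂ * M₁) * (b - a) ^ 2 := by
          gcongr
          exacts [sub_nonneg.2 ht.1.le, ht.2]
  calc _ ≤ (K₁ * M₂ + K₂ * M₁) * (b - a) ^ 2 * |b - a| := norm_integral_le_of_norm_le_const hbound
    _ = (K₁ * M₂ + K₂ * M₁) * (b - a) ^ 3 := by rw [abs_of_nonneg (sub_nonneg.2 hab)]; ring

/-- Key expansion in the second-order corrector's local truncation error:
the weighted integral equals the forward-difference approximation up to an
O((b-a)³) error. -/
theorem weighted_integral_forward_difference_expansion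
    {E : Type*} [NormedAddCommGroup E] [NormedSpace ℝ E] [CompleteSpace E]
    (a b : ℝ) (hab : a < b)
    (ψ ψ' ψ'' : ℝ → ℝ) (φ φ' φ'' : ℝ → E) (K₁ K₂ M₁ M₂ : ℝ)
    (hψ : ∀ u ∈ Set.Icc a b, HasDerivAt ψ (ψ' u) u)
    (hψ' : ∀ u ∈ Set.Icc a b, HasDerivAt ψ' (ψ'' u) u)
    (hK₁ : ∀ u ∈ Set.Icc a b, |ψ' u| ≤ K₁)
    (hK₂ : ∀ u ∈ Set.Icc a b, |ψ'' u| ≤ K₂)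
    (hφ : ∀ u ∈ Set.Icc a b, HasDerivAt φ (φ' u) u)
    (hφ' : ∀ u ∈ Set.Icc a b, HasDerivAt φ' (φ'' u) u)
    (hM₁ : ∀ u ∈ Set.Icc a b, ‖φ' u‖ ≤ M₁)
    (hM₂ : ∀ u ∈ Set.Icc a b, ‖φ'' u‖ ≤ M₂) :
    ‖(∫ u in a..b, ψ' u • φ u) - (ψ b - ψ a) • φ a
        - ((ψ b - ψ a) / 2) • (φ b - φ a)‖
      ≤ (M₁ * K₂ + K₁ * M₂) / 2 * (b - a) ^ 3 := by
  have hIcc : uIcc a b = Icc a b := uIcc_of_le hab.le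
  rw [integral_deriv_smul_sub_trapezoid_eq (hIcc ▸ hψ) (hIcc ▸ hφ)
      (HasDerivAt.continuousOn (hIcc ▸ hψ')).intervalIntegrable
      (HasDerivAt.continuousOn (hIcc ▸ hφ')).intervalIntegrable,
    norm_smul, norm_inv, Real.norm_ofNat]
  calc _ ≤ 2⁻¹ * ((K₁ * M₂ + K₂ * M₁) * (b - a) ^ 3) := by
        gcongr
        exact norm_integral_deriv_smul_sub_sub_smul_deriv_le hab.le hψ hψ' hK₁ hK₂ hφ hφ' hM₁ hM₂
    _ = (M₁ * K₂ + K₁ * M₂) / 2 * (b - a) ^ 3 := by ring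
end

section
/- Let E be a real Banach space, t₀ < t₁ real numbers, γ ≥ 0 a real number, and α, σ : ℝ → ℝ continuously differentiable and strictly positive on [t₀, t₁]. Let ε̂ : ℝ → E be continuous on [t₀, t₁] and let x : ℝ → E be differentiable on [t₀, t₁] with x'(t) = (α'(t)/α(t))•x(t) + (σ'(t) − (α'(t)/α(t))σ(t))•ε̂(t) for all t ∈ [t₀, t₁]. Define x̂(t) = (1/α(t))•(x(t) − σ(t)•ε̂(t)). Then x(t₁) = (σ(t₁)/σ(t₀))^γ • x(t₀) + σ(t₁)^γ • ( ∫_{t₀}^{t₁} (α'(t)σ(t)^{−γ} − γ α(t) σ(t)^{−γ−1} σ'(t)) • x̂(t) dt + ∫_{t₀}^{t₁} (1 − γ) σ(t)^{−γ} σ'(t) • ε̂(t) dt ), i.e. the exact solution of the probability-flow ODE satisfies the dual-prediction integral form with coefficients A = (σ(t₁)/σ(t₀))^γ, B = σ(t₁)^γ, C = d/dt(α σ^{−γ}), D = d/dt(σ^{1−γ}). -/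
/-!
Along the probability-flow ODE, the rescaled state `σ^{-γ} • x` has derivative
`C • x̂ + D • ε̂` with `C = d/dt (α σ^{-γ})` and `D = d/dt σ^{1-γ}`: the term in `x` produced by
`d/dt σ^{-γ}` is absorbed by writing `x = α • x̂ + σ • ε̂`. Integrating from `t₀` to `t₁` and
multiplying by `σ(t₁)^γ` gives the integral form.
-/

open Set intervalIntegral

noncomputable section

namespace DualPrediction

variable {E : Type*} [NormedAddCommGroup E] [NormedSpace ℝ E]
  {γ : ℝ} {α α' σ σ' : ℝ → ℝ} {εh x : ℝ → E} {s : Set ℝ}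

def dataPrediction (α σ : ℝ → ℝ) (εh x : ℝ → E) (t : ℝ) : E :=
  (1 / α t) • (x t - σ t • εh t)

/-- `d/dt (α σ^{-γ})`. -/
def dataCoeff (γ : ℝ) (α α' σ σ' : ℝ → ℝ) (t : ℝ) : ℝ :=
  α' t * σ t ^ (-γ) - γ * α t * σ t ^ (-γ - 1) * σ' t

/-- `d/dt σ^{1-γ}`. -/
def noiseCoeff (γ : ℝ) (σ σ' : ℝ → ℝ) (t : ℝ) : ℝ :=
  (1 - γ) * σ t ^ (-γ) * σ' t

theorem hasDerivAt_rpow_neg_smul {t : ℝ} (hσ : HasDerivAt σ (σ' t) t) (hαt : α t ≠ 0)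
    (hσt : 0 < σ t)
    (hx : HasDerivAt x ((α' t / α t) • x t + (σ' t - (α' t / α t) * σ t) • εh t) t) :
    HasDerivAt (fun s => σ s ^ (-γ) • x s)
      (dataCoeff γ α α' σ σ' t • dataPrediction α σ εh x t + noiseCoeff γ σ σ' t • εh t) t := by
  refine ((hσ.rpow_const (p := -γ) (Or.inl hσt.ne')).smul hx).congr_deriv ?_
  have hσγ : σ t ^ (-γ - 1) = σ t ^ (-γ) / σ t := by
    rw [Real.rpow_sub hσt, Real.rpow_one]
  simp only [dataCoeff, noiseCoeff, dataPrediction, hσγ]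
  match_scalars <;> field_simp <;> ring

theorem continuousOn_dataPrediction (hα : ContinuousOn α s) (hαpos : ∀ t ∈ s, α t ≠ 0)
    (hσ : ContinuousOn σ s) (hεh : ContinuousOn εh s) (hx : ContinuousOn x s) :
    ContinuousOn (dataPrediction α σ εh x) s :=
  (continuousOn_const.div hα hαpos).smul (hx.sub (hσ.smul hεh))

theorem continuousOn_dataCoeff (hα : ContinuousOn α s) (hα' : ContinuousOn α' s)
    (hσ : ContinuousOn σ s) (hσ' : ContinuousOn σ' s) (hσpos : ∀ t ∈ s, 0 < σ t) :
    ContinuousOn (dataCoeff γ α α' σ σ') s :=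
  have hσ0 : ∀ t ∈ s, σ t ≠ 0 := fun t ht => (hσpos t ht).ne'
  (hα'.mul (hσ.rpow_const fun t ht => Or.inl (hσ0 t ht))).sub
    (((continuousOn_const.mul hα).mul (hσ.rpow_const fun t ht => Or.inl (hσ0 t ht))).mul hσ')

theorem continuousOn_noiseCoeff (hσ : ContinuousOn σ s) (hσ' : ContinuousOn σ' s)
    (hσpos : ∀ t ∈ s, 0 < σ t) : ContinuousOn (noiseCoeff γ σ σ') s :=
  (continuousOn_const.mul (hσ.rpow_const fun t ht => Or.inl (hσpos t ht).ne')).mul hσ'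

end DualPrediction

theorem eq_div_rpow_smul_add_of_rpow_neg_smul_sub {E : Type*} [AddCommGroup E] [Module ℝ E]
    {a b γ : ℝ} (ha : 0 < a) (hb : 0 < b) {u v w : E} (h : b ^ (-γ) • v - a ^ (-γ) • u = w) :
    v = (b / a) ^ γ • u + b ^ γ • w := by
  have hbb : b ^ γ * b ^ (-γ) = 1 := by rw [← Real.rpow_add hb, add_neg_cancel, Real.rpow_zero]
  rw [← h, smul_sub, smul_smul, smul_smul, hbb, one_smul, Real.div_rpow hb.le ha.le,
    Real.rpow_neg ha.le, div_eq_mul_inv]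
  abel

end

open DualPrediction in
theorem dual_prediction_integral_form_nonneg_general
    {E : Type*} [NormedAddCommGroup E] [NormedSpace ℝ E] [CompleteSpace E]
    (t₀ t₁ : ℝ) (ht : t₀ < t₁) (γ : ℝ)
    (α α' σ σ' : ℝ → ℝ) (εh x : ℝ → E)
    (hα : ∀ t ∈ Set.Icc t₀ t₁, HasDerivAt α (α' t) t)
    (hα' : ContinuousOn α' (Set.Icc t₀ t₁))
    (hσ : ∀ t ∈ Set.Icc t₀ t₁, HasDerivAt σ (σ' t) t)
    (hσ' : ContinuousOn σ' (Set.Icc t₀ t₁))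
    (hαpos : ∀ t ∈ Set.Icc t₀ t₁, 0 < α t)
    (hσpos : ∀ t ∈ Set.Icc t₀ t₁, 0 < σ t)
    (hεh : ContinuousOn εh (Set.Icc t₀ t₁))
    (hx : ∀ t ∈ Set.Icc t₀ t₁,
      HasDerivAt x ((α' t / α t) • x t + (σ' t - (α' t / α t) * σ t) • εh t) t) :
    x t₁ = ((σ t₁ / σ t₀) ^ γ) • x t₀
        + (σ t₁ ^ γ) •
          ((∫ t in t₀..t₁,
              (α' t * σ t ^ (-γ) - γ * α t * σ t ^ (-γ - 1) * σ' t) •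
                ((1 / α t) • (x t - σ t • εh t)))
            + ∫ t in t₀..t₁, ((1 - γ) * σ t ^ (-γ) * σ' t) • εh t) := by
  have hI : uIcc t₀ t₁ = Icc t₀ t₁ := uIcc_of_le ht.le
  have hαc : ContinuousOn α (Icc t₀ t₁) := fun t h => (hα t h).continuousAt.continuousWithinAt
  have hσc : ContinuousOn σ (Icc t₀ t₁) := fun t h => (hσ t h).continuousAt.continuousWithinAt
  have hxc : ContinuousOn x (Icc t₀ t₁) := fun t h => (hx t h).continuousAt.continuousWithinAt
  have hC : IntervalIntegrable
      (fun t => dataCoeff γ α α' σ σ' t • dataPrediction α σ εh x t) MeasureTheory.volume t₀ t₁ :=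
    ContinuousOn.intervalIntegrable <| hI ▸
      (continuousOn_dataCoeff hαc hα' hσc hσ' hσpos).smul
        (continuousOn_dataPrediction hαc (fun t h => (hαpos t h).ne') hσc hεh hxc)
  have hD : IntervalIntegrable (fun t => noiseCoeff γ σ σ' t • εh t) MeasureTheory.volume t₀ t₁ :=
    ContinuousOn.intervalIntegrable <| hI ▸ (continuousOn_noiseCoeff hσc hσ' hσpos).smul hεh
  have hFTC := integral_eq_sub_of_hasDerivAt (fun t h => hasDerivAt_rpow_neg_smul (hσ t (hI ▸ h))
    (hαpos t (hI ▸ h)).ne' (hσpos t (hI ▸ h)) (hx t (hI ▸ h))) (hC.add hD)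
  rw [integral_add hC hD] at hFTC
  exact eq_div_rpow_smul_add_of_rpow_neg_smul_sub (hσpos t₀ (left_mem_Icc.2 ht.le))
    (hσpos t₁ (right_mem_Icc.2 ht.le)) hFTC.symm

/-- Integral form of dual prediction for γ ≥ 0: the exact solution of the
probability-flow ODE satisfies the dual-prediction integral form with
A = (σ(t₁)/σ(t₀))^γ, B = σ(t₁)^γ, C = d/dt(α σ^{-γ}), D = d/dt(σ^{1-γ}). -/
theorem dual_prediction_integral_form_nonneg
    {E : Type*} [NormedAddCommGroup E] [NormedSpace ℝ E] [CompleteSpace E]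
    (t₀ t₁ : ℝ) (ht : t₀ < t₁) (γ : ℝ) (hγ : 0 ≤ γ)
    (α α' σ σ' : ℝ → ℝ) (εh x : ℝ → E)
    (hα : ∀ t ∈ Set.Icc t₀ t₁, HasDerivAt α (α' t) t)
    (hα' : ContinuousOn α' (Set.Icc t₀ t₁))
    (hσ : ∀ t ∈ Set.Icc t₀ t₁, HasDerivAt σ (σ' t) t)
    (hσ' : ContinuousOn σ' (Set.Icc t₀ t₁))
    (hαpos : ∀ t ∈ Set.Icc t₀ t₁, 0 < α t)
    (hσpos : ∀ t ∈ Set.Icc t₀ t₁, 0 < σ t)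
    (hεh : ContinuousOn εh (Set.Icc t₀ t₁))
    (hx : ∀ t ∈ Set.Icc t₀ t₁,
      HasDerivAt x ((α' t / α t) • x t + (σ' t - (α' t / α t) * σ t) • εh t) t) :
    x t₁ = ((σ t₁ / σ t₀) ^ γ) • x t₀
        + (σ t₁ ^ γ) •
          ((∫ t in t₀..t₁,
              (α' t * σ t ^ (-γ) - γ * α t * σ t ^ (-γ - 1) * σ' t) •
                ((1 / α t) • (x t - σ t • εh t)))
            + ∫ t in t₀..t₁, ((1 - γ) * σ t ^ (-γ) * σ' t) • εh t) :=
  dual_prediction_integral_form_nonneg_general t₀ t₁ ht γ α α' σ σ' εh x hα hα' hσ hσ' hαpos hσpos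
    hεh hx
end

section
/- Let E be a real Banach space, t₀ < t₁ real numbers, γ < 0 a real number, and α, σ : ℝ → ℝ continuously differentiable and strictly positive on [t₀, t₁]. Let ε̂ : ℝ → E be continuous on [t₀, t₁] and let x : ℝ → E be differentiable on [t₀, t₁] with x'(t) = (α'(t)/α(t))•x(t) + (σ'(t) − (α'(t)/α(t))σ(t))•ε̂(t) for all t ∈ [t₀, t₁]. Define x̂(t) = (1/α(t))•(x(t) − σ(t)•ε̂(t)). Then x(t₁) = (α(t₁)/α(t₀))^{−γ} • x(t₀) + α(t₁)^{−γ} • ( ∫_{t₀}^{t₁} (1 + γ) α(t)^{γ} α'(t) • x̂(t) dt + ∫_{t₀}^{t₁} (σ'(t) α(t)^{γ} + γ σ(t) α(t)^{γ−1} α'(t)) • ε̂(t) dt ), i.e. the exact solution of the probability-flow ODE satisfies the dual-prediction integral form with coefficients A = (α(t₁)/α(t₀))^{−γ}, B = α(t₁)^{−γ}, C = d/dt(α^{1+γ}), D = d/dt(σ α^{γ}). -/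
/-!
Along a solution of the probability-flow ODE, `t ↦ α t ^ γ • x t` has derivative
`(1 + γ) α^γ α' • x̂ + (σ' α^γ + γ σ α^(γ-1) α') • ε̂`: the factor `α^γ` turns the linear
part `(α'/α) • x` of the drift into `(1 + γ) α^(γ-1) α' • x`, and substituting
`x = α • x̂ + σ • ε̂` there splits it into the two integrands. The fundamental theorem of
calculus identifies the sum of the two integrals with `α(t₁)^γ x(t₁) - α(t₀)^γ x(t₀)`,
and multiplying by `α(t₁)^(-γ)` gives the integral form.
-/

open Set MeasureTheory intervalIntegral

section

variable {E : Type*} [NormedAddCommGroup E] [NormedSpace ℝ E]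

theorem hasDerivAt_rpow_smul_of_hasDerivAt_flow {α : ℝ → ℝ} {γ a s c t : ℝ}
    {x : ℝ → E} {e : E} (hα : HasDerivAt α a t) (hαt : α t ≠ 0)
    (hx : HasDerivAt x ((a / α t) • x t + (s - (a / α t) * c) • e) t) :
    HasDerivAt (fun u ↦ α u ^ γ • x u)
      (((1 + γ) * α t ^ γ * a) • ((1 / α t) • (x t - c • e))
        + (s * α t ^ γ + γ * c * α t ^ (γ - 1) * a) • e) t := by
  convert (hα.rpow_const (p := γ) (Or.inl hαt)).smul hx using 1
  · rfl
  rw [Real.rpow_sub_one hαt]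
  generalize α t ^ γ = A
  simp only [smul_smul, smul_sub, smul_add]
  match_scalars <;> field_simp; ring

theorem eq_rpow_neg_smul_add_of_rpow_smul_sub_eq {a₀ a₁ γ : ℝ} {y₀ y₁ v : E}
    (h₀ : 0 < a₀) (h₁ : 0 < a₁) (h : v = a₁ ^ γ • y₁ - a₀ ^ γ • y₀) :
    y₁ = (a₁ / a₀) ^ (-γ) • y₀ + a₁ ^ (-γ) • v := by
  have hdiv : (a₁ / a₀) ^ (-γ) = a₁ ^ (-γ) * a₀ ^ γ := by
    rw [Real.div_rpow h₁.le h₀.le, Real.rpow_neg h₀.le, div_eq_mul_inv, inv_inv]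
  rw [hdiv, h, smul_sub, smul_smul, ← Real.rpow_add h₁, neg_add_cancel, Real.rpow_zero,
    one_smul]
  module

end

theorem dual_prediction_integral_form_neg_general
    {E : Type*} [NormedAddCommGroup E] [NormedSpace ℝ E] [CompleteSpace E]
    (t₀ t₁ : ℝ) (ht : t₀ < t₁) (γ : ℝ)
    (α α' σ σ' : ℝ → ℝ) (εh x : ℝ → E)
    (hα : ∀ t ∈ Set.Icc t₀ t₁, HasDerivAt α (α' t) t)
    (hα' : ContinuousOn α' (Set.Icc t₀ t₁))
    (hσ : ∀ t ∈ Set.Icc t₀ t₁, HasDerivAt σ (σ' t) t)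
    (hσ' : ContinuousOn σ' (Set.Icc t₀ t₁))
    (hαpos : ∀ t ∈ Set.Icc t₀ t₁, 0 < α t)
    (hεh : ContinuousOn εh (Set.Icc t₀ t₁))
    (hx : ∀ t ∈ Set.Icc t₀ t₁,
      HasDerivAt x ((α' t / α t) • x t + (σ' t - (α' t / α t) * σ t) • εh t) t) :
    x t₁ = ((α t₁ / α t₀) ^ (-γ)) • x t₀
        + (α t₁ ^ (-γ)) •
          ((∫ t in t₀..t₁,
              ((1 + γ) * α t ^ γ * α' t) • ((1 / α t) • (x t - σ t • εh t)))
            + ∫ t in t₀..t₁,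
              (σ' t * α t ^ γ + γ * σ t * α t ^ (γ - 1) * α' t) • εh t) := by
  have hαne : ∀ t ∈ Icc t₀ t₁, α t ≠ 0 := fun t ht ↦ (hαpos t ht).ne'
  have hαc := HasDerivAt.continuousOn hα
  have hσc := HasDerivAt.continuousOn hσ
  have hxc := HasDerivAt.continuousOn hx
  have hαrpow (p : ℝ) : ContinuousOn (α · ^ p) (Icc t₀ t₁) :=
    hαc.rpow_const fun t ht ↦ .inl (hαne t ht)
  have hint₁ : IntervalIntegrable
      (fun t ↦ ((1 + γ) * α t ^ γ * α' t) • ((1 / α t) • (x t - σ t • εh t))) volume t₀ t₁ :=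
    ContinuousOn.intervalIntegrable_of_Icc ht.le <|
      ((continuousOn_const.mul (hαrpow _)).mul hα').smul <|
        (continuousOn_const.div hαc hαne).smul (hxc.sub (hσc.smul hεh))
  have hint₂ : IntervalIntegrable
      (fun t ↦ (σ' t * α t ^ γ + γ * σ t * α t ^ (γ - 1) * α' t) • εh t) volume t₀ t₁ :=
    ContinuousOn.intervalIntegrable_of_Icc ht.le <|
      ((hσ'.mul (hαrpow _)).add
        (((continuousOn_const.mul hσc).mul (hαrpow _)).mul hα')).smul hεh
  refine eq_rpow_neg_smul_add_of_rpow_smul_sub_eq (hαpos t₀ (left_mem_Icc.2 ht.le))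
    (hαpos t₁ (right_mem_Icc.2 ht.le)) ?_
  rw [← integral_add hint₁ hint₂]
  refine integral_eq_sub_of_hasDerivAt (f := fun u ↦ α u ^ γ • x u) (fun t htI ↦ ?_)
    (hint₁.add hint₂)
  rw [uIcc_of_le ht.le] at htI
  exact hasDerivAt_rpow_smul_of_hasDerivAt_flow (hα t htI) (hαne t htI) (hx t htI)

/-- Integral form of dual prediction for γ < 0: the exact solution of the
probability-flow ODE satisfies the dual-prediction integral form with
A = (α(t₁)/α(t₀))^{-γ}, B = α(t₁)^{-γ}, C = d/dt(α^{1+γ}), D = d/dt(σ α^{γ}). -/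
theorem dual_prediction_integral_form_neg
    {E : Type*} [NormedAddCommGroup E] [NormedSpace ℝ E] [CompleteSpace E]
    (t₀ t₁ : ℝ) (ht : t₀ < t₁) (γ : ℝ) (hγ : γ < 0)
    (α α' σ σ' : ℝ → ℝ) (εh x : ℝ → E)
    (hα : ∀ t ∈ Set.Icc t₀ t₁, HasDerivAt α (α' t) t)
    (hα' : ContinuousOn α' (Set.Icc t₀ t₁))
    (hσ : ∀ t ∈ Set.Icc t₀ t₁, HasDerivAt σ (σ' t) t)
    (hσ' : ContinuousOn σ' (Set.Icc t₀ t₁))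
    (hαpos : ∀ t ∈ Set.Icc t₀ t₁, 0 < α t)
    (hσpos : ∀ t ∈ Set.Icc t₀ t₁, 0 < σ t)
    (hεh : ContinuousOn εh (Set.Icc t₀ t₁))
    (hx : ∀ t ∈ Set.Icc t₀ t₁,
      HasDerivAt x ((α' t / α t) • x t + (σ' t - (α' t / α t) * σ t) • εh t) t) :
    x t₁ = ((α t₁ / α t₀) ^ (-γ)) • x t₀
        + (α t₁ ^ (-γ)) •
          ((∫ t in t₀..t₁,
              ((1 + γ) * α t ^ γ * α' t) • ((1 / α t) • (x t - σ t • εh t)))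
            + ∫ t in t₀..t₁,
              (σ' t * α t ^ γ + γ * σ t * α t ^ (γ - 1) * α' t) • εh t) :=
  dual_prediction_integral_form_neg_general t₀ t₁ ht γ α α' σ σ' εh x hα hα' hσ hσ' hαpos hεh hx
end

section
/- Let E be a real normed vector space, c, s ∈ ℝ, and x, ε ∈ E. Define, for Δ ∈ ℝ, the noise-prediction Euler update N(Δ) = c•(x − (sΔ)•ε) and the data-prediction Euler update D(Δ) = c•(((1 + Δ) exp(−Δ))•x − (exp(−Δ) s Δ)•ε). Then the difference Δ ↦ D(Δ) − N(Δ) is O(Δ²) as Δ → 0; more precisely, D(Δ) − N(Δ) = c•(((1 + Δ)e^{−Δ} − 1)•x + ((1 − e^{−Δ}) s Δ)•ε), and both scalar coefficients (1 + Δ)e^{−Δ} − 1 and (1 − e^{−Δ})Δ are O(Δ²) at Δ = 0. -/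
/-!
Since `exp (-Δ) = 1 - Δ + O(Δ²)`, both `(1 + Δ) exp (-Δ) - 1 = (exp (-Δ) - 1 + Δ) + Δ (exp (-Δ) - 1)`
and `(1 - exp (-Δ)) Δ` are `O(Δ²)`; the difference of the two updates is a fixed linear
combination of `x` and `ε` with these coefficients.
-/

open Asymptotics Filter Topology

theorem Asymptotics.IsBigO.smul_const {α E : Type*} [NormedAddCommGroup E] [NormedSpace ℝ E]
    {l : Filter α} {f g : α → ℝ} (h : f =O[l] g) (v : E) :
    (fun x => f x • v) =O[l] g := by
  simpa using h.smul (isBigO_const_one ℝ v l)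

namespace Real

theorem exp_neg_sub_sum_range_isBigO_pow (n : ℕ) :
    (fun Δ : ℝ => exp (-Δ) - ∑ i ∈ Finset.range n, (-Δ) ^ i / i.factorial) =O[𝓝 0] (· ^ n) :=
  ((exp_sub_sum_range_isBigO_pow n).comp_tendsto (continuous_neg.tendsto' 0 0 neg_zero)).trans
    (isBigO_of_le _ fun Δ => by simp)

theorem exp_neg_sub_one_isBigO_id : (fun Δ : ℝ => exp (-Δ) - 1) =O[𝓝 0] fun Δ => Δ := by
  simpa using exp_neg_sub_sum_range_isBigO_pow 1

theorem exp_neg_sub_one_add_isBigO_sq : (fun Δ : ℝ => exp (-Δ) - 1 + Δ) =O[𝓝 0] (· ^ 2) := by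
  refine (exp_neg_sub_sum_range_isBigO_pow 2).congr_left fun Δ => ?_
  simp only [Finset.sum_range_succ, Finset.sum_range_zero]
  norm_num
  ring

theorem one_add_mul_exp_neg_sub_one_isBigO_sq :
    (fun Δ : ℝ => (1 + Δ) * exp (-Δ) - 1) =O[𝓝 0] fun Δ => Δ ^ 2 := by
  have h : (fun Δ : ℝ => Δ * (exp (-Δ) - 1)) =O[𝓝 0] fun Δ => Δ ^ 2 := by
    simpa [sq] using (isBigO_refl (fun Δ : ℝ => Δ) _).mul exp_neg_sub_one_isBigO_id
  refine (exp_neg_sub_one_add_isBigO_sq.add h).congr_left fun Δ => ?_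
  ring

theorem one_sub_exp_neg_mul_isBigO_sq :
    (fun Δ : ℝ => (1 - exp (-Δ)) * Δ) =O[𝓝 0] fun Δ => Δ ^ 2 := by
  simpa [sq] using exp_neg_sub_one_isBigO_id.neg_left.mul (isBigO_refl (fun Δ : ℝ => Δ) (𝓝 0))

end Real

section EulerStep

variable {E : Type*}

/-- One Euler step of size `Δ = Δλ` in the half log-SNR `λ = log (α / σ)` applied to the noise
prediction, with `c = α_{t_{i+1}} / α_{t_i}`, `s = σ_{t_i}`, `x = x_{t_i}` and `ε = ε_θ(x_{t_i}, t_i)`. -/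
def noiseEulerStep [AddCommGroup E] [Module ℝ E] (c s : ℝ) (x ε : E) (Δ : ℝ) : E :=
  c • (x - (s * Δ) • ε)

/-- The same Euler step applied to the data prediction, rewritten through
`x_t = α_t x_θ + σ_t ε_θ`. -/
noncomputable def dataEulerStep [AddCommGroup E] [Module ℝ E] (c s : ℝ) (x ε : E) (Δ : ℝ) : E :=
  c • (((1 + Δ) * Real.exp (-Δ)) • x - (Real.exp (-Δ) * s * Δ) • ε)

theorem dataEulerStep_sub_noiseEulerStep [AddCommGroup E] [Module ℝ E] (c s : ℝ) (x ε : E)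
    (Δ : ℝ) :
    dataEulerStep c s x ε Δ - noiseEulerStep c s x ε Δ
      = c • (((1 + Δ) * Real.exp (-Δ) - 1) • x + ((1 - Real.exp (-Δ)) * s * Δ) • ε) := by
  unfold dataEulerStep noiseEulerStep
  module

theorem dataEulerStep_sub_noiseEulerStep_isBigO_sq [NormedAddCommGroup E] [NormedSpace ℝ E]
    (c s : ℝ) (x ε : E) :
    (fun Δ => dataEulerStep c s x ε Δ - noiseEulerStep c s x ε Δ) =O[𝓝 0] fun Δ => Δ ^ 2 := by
  have hε : (fun Δ : ℝ => ((1 - Real.exp (-Δ)) * s * Δ) • ε) =O[𝓝 0] fun Δ => Δ ^ 2 :=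
    ((Real.one_sub_exp_neg_mul_isBigO_sq.const_mul_left s).smul_const ε).congr_left fun Δ => by
      ring_nf
  have hx := Real.one_add_mul_exp_neg_sub_one_isBigO_sq.smul_const x
  rw [funext (dataEulerStep_sub_noiseEulerStep c s x ε)]
  exact (hx.add hε).const_smul_left c

end EulerStep

/-- Discretization discrepancy between the noise-prediction and
data-prediction Euler updates: they differ at order O(Δ²). -/
theorem euler_update_discrepancy
    {E : Type*} [NormedAddCommGroup E] [NormedSpace ℝ E]
    (c s : ℝ) (x ε : E) :
    (∀ Δ : ℝ,
      (c • (((1 + Δ) * Real.exp (-Δ)) • x - (Real.exp (-Δ) * s * Δ) • ε))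
        - (c • (x - (s * Δ) • ε))
      = c • ((((1 + Δ) * Real.exp (-Δ) - 1)) • x
          + ((1 - Real.exp (-Δ)) * s * Δ) • ε)) ∧
    ((fun Δ : ℝ =>
        (c • (((1 + Δ) * Real.exp (-Δ)) • x - (Real.exp (-Δ) * s * Δ) • ε))
          - (c • (x - (s * Δ) • ε)))
      =O[𝓝 0] fun Δ : ℝ => Δ ^ 2) ∧
    ((fun Δ : ℝ => (1 + Δ) * Real.exp (-Δ) - 1) =O[𝓝 0] fun Δ : ℝ => Δ ^ 2) ∧
    ((fun Δ : ℝ => (1 - Real.exp (-Δ)) * Δ) =O[𝓝 0] fun Δ : ℝ => Δ ^ 2) :=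
  ⟨dataEulerStep_sub_noiseEulerStep c s x ε, dataEulerStep_sub_noiseEulerStep_isBigO_sq c s x ε,
    Real.one_add_mul_exp_neg_sub_one_isBigO_sq, Real.one_sub_exp_neg_mul_isBigO_sq⟩
end
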